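/- Let G be a centered Gaussian process whose covariance R(t,s) = E[G_t G_s] satisfies ∂²R/∂t∂s (t,s) = C_β |t-s|^{2β-2} + Ψ(t,s) with |Ψ(t,s)| ≤ C'_β (ts)^{β-1} for some β ∈ (1/2,1), in the sense that E[(G_t - G_s)²] = ∫_s^t ∫_s^t ∂²R/∂u∂v (u,v) du dv. Then there exists C > 0 independent of s,t such that E[(G_t - G_s)²] ≤ C |t-s|^{2β} for all 0 ≤ s ≤ t. -/

import Mathlib

/-!
Split the integrand into its two parts. Since `2β - 2 > -1` the singular part is integrable,
with `∫_s^t |u - v|^{2β-2} dv ≤ 2 (t-s)^{2β-1} / (2β-1)` for `u ∈ [s, t]`. The correction is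
bounded by the product kernel `C'β u^{β-1} v^{β-1}`, whose double integral is
`C'β ((t^β - s^β) / β)^2 ≤ C'β (t-s)^{2β} / β^2` by subadditivity of `x ↦ x^β`.
Non-integrable integrands only help, since their interval integral is `0` while the
majorants are nonnegative.
-/

open MeasureTheory intervalIntegral Real Set

lemma integral_le_of_le_of_nonneg {f g : ℝ → ℝ} {a b : ℝ} (hab : a ≤ b)
    (hg : IntervalIntegrable g volume a b) (hg₀ : ∀ x ∈ Icc a b, 0 ≤ g x)
    (hfg : ∀ x ∈ Icc a b, f x ≤ g x) :
    ∫ x in a..b, f x ≤ ∫ x in a..b, g x := by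
  by_cases hf : IntervalIntegrable f volume a b
  · exact integral_mono_on hab hf hg hfg
  · rw [integral_undef hf]
    exact integral_nonneg hab hg₀

lemma rpow_sub_rpow_le_rpow_sub {x y p : ℝ} (hy : 0 ≤ y) (hyx : y ≤ x) (hp₀ : 0 ≤ p)
    (hp₁ : p ≤ 1) : x ^ p - y ^ p ≤ (x - y) ^ p := by
  have := rpow_add_le_add_rpow (sub_nonneg.2 hyx) hy hp₀ hp₁
  rw [sub_add_cancel] at this
  linarith

lemma integral_rpow_sub_one_le {β s t : ℝ} (hβ₀ : 0 < β) (hβ₁ : β ≤ 1) (hs : 0 ≤ s)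
    (hst : s ≤ t) : ∫ v in s..t, v ^ (β - 1) ≤ (t - s) ^ β / β := by
  rw [integral_rpow (Or.inl (by linarith)), sub_add_cancel]
  gcongr
  exact rpow_sub_rpow_le_rpow_sub hs hst hβ₀.le hβ₁

lemma intervalIntegrable_abs_sub_rpow {p : ℝ} (hp : -1 < p) (u a b : ℝ) :
    IntervalIntegrable (fun v => |u - v| ^ p) volume a b := by
  suffices h : ∀ c, IntervalIntegrable (fun v => |u - v| ^ p) volume u c from
    (h a).symm.trans (h b)
  intro c
  rcases le_total u c with huc | hcu
  · rw [intervalIntegrable_congr (g := fun v => (v - u) ^ p) fun v hv => by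
      rw [abs_sub_comm, abs_of_nonneg (sub_nonneg.2 (uIoc_of_le huc ▸ hv).1.le)]]
    simpa using (intervalIntegrable_rpow' hp (a := 0) (b := c - u)).comp_sub_right u
  · rw [intervalIntegrable_congr (g := fun v => (u - v) ^ p) fun v hv => by
      rw [abs_of_nonneg (sub_nonneg.2 (uIoc_of_ge hcu ▸ hv).2)]]
    simpa using (intervalIntegrable_rpow' hp (a := 0) (b := u - c)).comp_sub_left u

lemma integral_abs_sub_rpow {p s u t : ℝ} (hp : -1 < p) (hsu : s ≤ u) (hut : u ≤ t) :
    ∫ v in s..t, |u - v| ^ p = ((u - s) ^ (p + 1) + (t - u) ^ (p + 1)) / (p + 1) := by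
  have hp₁ : p + 1 ≠ 0 := by linarith
  have left : ∫ v in s..u, |u - v| ^ p = (u - s) ^ (p + 1) / (p + 1) := by
    rw [integral_congr (g := fun v => (u - v) ^ p) fun v hv => by
      rw [abs_of_nonneg (sub_nonneg.2 (uIcc_of_le hsu ▸ hv).2)]]
    rw [integral_comp_sub_left (fun x => x ^ p), integral_rpow (Or.inl hp), sub_self,
      zero_rpow hp₁, sub_zero]
  have right : ∫ v in u..t, |u - v| ^ p = (t - u) ^ (p + 1) / (p + 1) := by
    rw [integral_congr (g := fun v => (v - u) ^ p) fun v hv => by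
      rw [abs_sub_comm, abs_of_nonneg (sub_nonneg.2 (uIcc_of_le hut ▸ hv).1)]]
    rw [integral_comp_sub_right (fun x => x ^ p), integral_rpow (Or.inl hp), sub_self,
      zero_rpow hp₁, sub_zero]
  rw [← integral_add_adjacent_intervals (intervalIntegrable_abs_sub_rpow hp u s u)
    (intervalIntegrable_abs_sub_rpow hp u u t), left, right, add_div]

lemma integral_abs_sub_rpow_le {p s u t : ℝ} (hp : -1 < p) (hsu : s ≤ u) (hut : u ≤ t) :
    ∫ v in s..t, |u - v| ^ p ≤ 2 * (t - s) ^ (p + 1) / (p + 1) := by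
  have hp₁ : 0 < p + 1 := by linarith
  rw [integral_abs_sub_rpow hp hsu hut, two_mul]
  gcongr

section Kernel

variable {β Cβ C'β : ℝ} {Ψ : ℝ → ℝ → ℝ} {s t : ℝ}

lemma integral_kernel_le (hβ : β ∈ Ioo (1/2 : ℝ) 1) (hCβ : 0 ≤ Cβ) (hC'β : 0 ≤ C'β)
    (hΨ : ∀ u v : ℝ, 0 ≤ u → 0 ≤ v → |Ψ u v| ≤ C'β * (u * v) ^ (β - 1))
    (hs : 0 ≤ s) {u : ℝ} (hsu : s ≤ u) (hut : u ≤ t) :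
    ∫ v in s..t, (Cβ * |u - v| ^ (2*β - 2) + Ψ u v) ≤
      2 * Cβ / (2*β - 1) * (t - s) ^ (2*β - 1) + C'β / β * (t - s) ^ β * u ^ (β - 1) := by
  obtain ⟨hβ₁, hβ₂⟩ := hβ
  have hp : -1 < 2*β - 2 := by linarith
  have hu : 0 ≤ u := hs.trans hsu
  have hst : s ≤ t := hsu.trans hut
  have hsing := integral_abs_sub_rpow_le hp hsu hut
  rw [show 2*β - 2 + 1 = 2*β - 1 by ring] at hsing
  have hsing_int := (intervalIntegrable_abs_sub_rpow hp u s t).const_mul Cβ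
  have hprod_int : IntervalIntegrable (fun v => C'β * u ^ (β - 1) * v ^ (β - 1)) volume s t :=
    (intervalIntegrable_rpow' (by linarith)).const_mul _
  calc ∫ v in s..t, (Cβ * |u - v| ^ (2*β - 2) + Ψ u v)
      ≤ ∫ v in s..t, (Cβ * |u - v| ^ (2*β - 2) + C'β * u ^ (β - 1) * v ^ (β - 1)) := by
        refine integral_le_of_le_of_nonneg hst (hsing_int.add hprod_int)
          (fun v hv => by have := hs.trans hv.1; positivity) fun v hv => ?_
        have hv₀ := hs.trans hv.1
        have := (le_abs_self _).trans (hΨ u v hu hv₀)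
        rw [mul_rpow hu hv₀, ← mul_assoc] at this
        linarith
    _ = Cβ * (∫ v in s..t, |u - v| ^ (2*β - 2))
          + C'β * u ^ (β - 1) * ∫ v in s..t, v ^ (β - 1) := by
        rw [integral_add hsing_int hprod_int, intervalIntegral.integral_const_mul,
          intervalIntegral.integral_const_mul]
    _ ≤ Cβ * (2 * (t - s) ^ (2*β - 1) / (2*β - 1))
          + C'β * u ^ (β - 1) * ((t - s) ^ β / β) := by
        gcongr
        exact integral_rpow_sub_one_le (by linarith) hβ₂.le hs hst
    _ = _ := by ring

lemma integral_integral_kernel_le (hβ : β ∈ Ioo (1/2 : ℝ) 1) (hCβ : 0 ≤ Cβ) (hC'β : 0 ≤ C'β)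
    (hΨ : ∀ u v : ℝ, 0 ≤ u → 0 ≤ v → |Ψ u v| ≤ C'β * (u * v) ^ (β - 1))
    (hs : 0 ≤ s) (hst : s ≤ t) :
    ∫ u in s..t, ∫ v in s..t, (Cβ * |u - v| ^ (2*β - 2) + Ψ u v) ≤
      (2 * Cβ / (2*β - 1) + C'β / β ^ 2) * (t - s) ^ (2*β) := by
  have ⟨hβ₁, hβ₂⟩ := hβ
  have hh : 0 ≤ t - s := sub_nonneg.2 hst
  have hβ₀ : 0 < β := by linarith
  have hpow : IntervalIntegrable (fun u => u ^ (β - 1)) volume s t :=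
    intervalIntegrable_rpow' (by linarith)
  calc ∫ u in s..t, ∫ v in s..t, (Cβ * |u - v| ^ (2*β - 2) + Ψ u v)
      ≤ ∫ u in s..t, (2 * Cβ / (2*β - 1) * (t - s) ^ (2*β - 1)
          + C'β / β * (t - s) ^ β * u ^ (β - 1)) := by
        refine integral_le_of_le_of_nonneg hst (intervalIntegrable_const.add (hpow.const_mul _))
          (fun u hu => ?_) fun u hu => integral_kernel_le hβ hCβ hC'β hΨ hs hu.1 hu.2
        have := hs.trans hu.1
        have : 0 < 2*β - 1 := by linarith
        positivity
    _ = 2 * Cβ / (2*β - 1) * ((t - s) ^ (2*β - 1) * (t - s))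
          + C'β / β * (t - s) ^ β * ∫ u in s..t, u ^ (β - 1) := by
        rw [integral_add intervalIntegrable_const (hpow.const_mul _), intervalIntegral.integral_const,
          intervalIntegral.integral_const_mul, smul_eq_mul]
        ring
    _ ≤ 2 * Cβ / (2*β - 1) * ((t - s) ^ (2*β - 1) * (t - s))
          + C'β / β * (t - s) ^ β * ((t - s) ^ β / β) := by
        gcongr
        exact integral_rpow_sub_one_le hβ₀ hβ₂.le hs hst
    _ = (2 * Cβ / (2*β - 1) + C'β / β ^ 2) * (t - s) ^ (2*β) := by
        rw [← rpow_add_one' hh (by linarith), sub_add_cancel]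
        have : (t - s) ^ (2*β) = (t - s) ^ β * (t - s) ^ β := by
          rw [← rpow_add' hh (by linarith), two_mul]
        rw [this]
        field_simp

end Kernel

theorem stmt_3_general {Ω : Type*} [MeasurableSpace Ω] (P : Measure Ω)
    (G : ℝ → Ω → ℝ) (β Cβ C'β : ℝ) (hβ : β ∈ Set.Ioo (1/2 : ℝ) 1)
    (hCβ : 0 < Cβ) (hC'β : 0 ≤ C'β) (Ψ : ℝ → ℝ → ℝ)
    (hΨ : ∀ u v : ℝ, 0 ≤ u → 0 ≤ v → |Ψ u v| ≤ C'β * (u * v) ^ (β - 1))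
    (hrep : ∀ s t : ℝ, 0 ≤ s → s ≤ t →
      (∫ ω, (G t ω - G s ω) ^ 2 ∂P) =
        ∫ u in s..t, ∫ v in s..t, (Cβ * |u - v| ^ (2*β - 2) + Ψ u v)) :
    ∃ C > (0:ℝ), ∀ s t : ℝ, 0 ≤ s → s ≤ t →
      (∫ ω, (G t ω - G s ω) ^ 2 ∂P) ≤ C * |t - s| ^ (2*β) := by
  have hC : 0 < 2 * Cβ / (2*β - 1) + C'β / β ^ 2 :=
    add_pos_of_pos_of_nonneg (div_pos (by linarith) (by linarith [hβ.1])) (by positivity)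
  refine ⟨_, hC, fun s t hs hst => ?_⟩
  rw [hrep s t hs hst, abs_of_nonneg (sub_nonneg.2 hst)]
  exact integral_integral_kernel_le hβ hCβ.le hC'β hΨ hs hst

theorem stmt_3 {Ω : Type*} [MeasurableSpace Ω] (P : Measure Ω) [IsProbabilityMeasure P]
    (G : ℝ → Ω → ℝ) (β Cβ C'β : ℝ) (hβ : β ∈ Set.Ioo (1/2 : ℝ) 1)
    (hCβ : 0 < Cβ) (hC'β : 0 ≤ C'β) (Ψ : ℝ → ℝ → ℝ)
    (hΨ : ∀ u v : ℝ, 0 ≤ u → 0 ≤ v → |Ψ u v| ≤ C'β * (u * v) ^ (β - 1))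
    (hrep : ∀ s t : ℝ, 0 ≤ s → s ≤ t →
      (∫ ω, (G t ω - G s ω) ^ 2 ∂P) =
        ∫ u in s..t, ∫ v in s..t, (Cβ * |u - v| ^ (2*β - 2) + Ψ u v)) :
    ∃ C > (0:ℝ), ∀ s t : ℝ, 0 ≤ s → s ≤ t →
      (∫ ω, (G t ω - G s ω) ^ 2 ∂P) ≤ C * |t - s| ^ (2*β) :=
  stmt_3_general P G β Cβ C'β hβ hCβ hC'β Ψ hΨ hrep
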